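/- arXiv:1607.03471 — 2 statements merged into one kernel-verified Lean document; each statement's English description precedes it below -/
import Mathlib

section
/- Let k ≥ 1. If the cop at vertex c has k-cornered the robber at vertex r₀, then for every robber move r₁ ∈ N[r₀] there exists a cop move c₁ ∈ N[c] such that c₁ has k-caught r₁, i.e. c₁ ∈ Fₖ(r₁). -/
open Classical

/-- A finite reflexive graph: adjacency is symmetric and every vertex is
adjacent to itself (closed neighborhood `N[v] = {u | Adj v u}`). -/
structure RefGraph (V : Type*) where
  Adj : V → V → Prop
  symm : ∀ u v, Adj u v → Adj v u
  refl : ∀ v, Adj v v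

namespace RefGraph

variable {V : Type*}

/-- `w` strictly corners `v` within the induced subgraph on `S`,
i.e. `N_S[v] ⊊ N_S[w]`. -/
def StrictCornersIn (G : RefGraph V) (S : Set V) (w v : V) : Prop :=
  w ∈ S ∧ v ∈ S ∧ (∀ u ∈ S, G.Adj v u → G.Adj w u) ∧ ∃ u ∈ S, G.Adj w u ∧ ¬ G.Adj v u

/-- `v` is a strict corner of the induced subgraph on `S`. -/
def IsStrictCorner (G : RefGraph V) (S : Set V) (v : V) : Prop :=
  ∃ w, G.StrictCornersIn S w v

/-- `S` induces a clique. -/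
def IsCliqueSet (G : RefGraph V) (S : Set V) : Prop :=
  ∀ u ∈ S, ∀ v ∈ S, G.Adj u v

/-- `lvl k` is the vertex set of the graph `G_{k+1}` of the corner ranking
procedure: start with all vertices and repeatedly delete all strict corners. -/
def lvl (G : RefGraph V) : ℕ → Set V
  | 0 => Set.univ
  | k + 1 => {v ∈ G.lvl k | ¬ G.IsStrictCorner (G.lvl k) v}

/-- The corner rank of a vertex: the stage (1-indexed) at which it is a strict
corner, or at which the remaining graph is a clique; `∞` if neither ever occurs. -/
noncomputable def cr (G : RefGraph V) (v : V) : ℕ∞ :=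
  sInf {n : ℕ∞ | ∃ m : ℕ, n = (m : ℕ∞) + 1 ∧ v ∈ G.lvl m ∧
    (G.IsStrictCorner (G.lvl m) v ∨ G.IsCliqueSet (G.lvl m))}

/-- The vertex set of `Gₖ`: the vertices of corner rank at least `k`. -/
def GkSet (G : RefGraph V) (k : ℕ) : Set V := {v | (k : ℕ∞) ≤ G.cr v}

/-- The corner rank of the graph: the largest corner rank of a vertex. -/
noncomputable def crGraph (G : RefGraph V) [Fintype V] : ℕ∞ :=
  Finset.univ.sup fun v => G.cr v

/-- The projection map `fₖ` on a single vertex `u` of `Gₖ`. -/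
noncomputable def fk (G : RefGraph V) (k : ℕ) (u : V) : Set V :=
  if (k : ℕ∞) < G.cr u then {u}
  else {w | w ∈ G.GkSet (k + 1) ∧ G.StrictCornersIn (G.GkSet k) w u}

/-- The projection map `Fₖ`: `F₁` is the identity and `Fₖ₊₁ = fₖ ∘ Fₖ`. -/
noncomputable def Fk (G : RefGraph V) : ℕ → V → Set V
  | 0, v => {v}
  | 1, v => {v}
  | k + 2, v => ⋃ u ∈ G.Fk (k + 1) v, G.fk (k + 1) u

/-- `r` is `k`-cornered by `c`: for `k = 0`, `c = r`; for `k ≥ 1`, some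
`r' ∈ Fₖ(r)` is cornered by `c` in the subgraph induced by `V(Gₖ) ∪ {c}`. -/
def kCornered (G : RefGraph V) : ℕ → V → V → Prop
  | 0, c, r => c = r
  | k + 1, c, r => ∃ r' ∈ G.Fk (k + 1) r,
      ∀ u, (u ∈ G.GkSet (k + 1) ∨ u = c) → G.Adj r' u → G.Adj c u

/-- With the cop at `c`, the vertex `r` is `k`-proj-safe: `cr r ≥ k` and some
`c' ∈ Fₖ(c)` is not adjacent to `r`. -/
def ProjSafe (G : RefGraph V) (k : ℕ) (c r : V) : Prop :=
  (k : ℕ∞) ≤ G.cr r ∧ ∃ c' ∈ G.Fk k c, ¬ G.Adj c' r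

/-- The cop at `c` can win within `k` cop moves against the robber at `r`,
robber to move. -/
def WinWithin (G : RefGraph V) : ℕ → V → V → Prop
  | 0, c, r => c = r
  | k + 1, c, r => c = r ∨ ∀ r₁, G.Adj r r₁ → ∃ c₁, G.Adj c c₁ ∧ G.WinWithin k c₁ r₁

/-- The cop at `c` can guarantee catching the robber at `r` within `n` cop
moves, cop to move. -/
def CanCatch (G : RefGraph V) : ℕ → V → V → Prop
  | 0, c, r => c = r
  | n + 1, c, r => c = r ∨ ∃ c', G.Adj c c' ∧
      (c' = r ∨ ∀ r', G.Adj r r' → G.CanCatch n c' r')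

/-- The cop has a winning strategy: some initial placement from which she can
guarantee capture in some bounded number of moves, whatever the robber does. -/
def CopWin (G : RefGraph V) : Prop :=
  ∃ (n : ℕ) (c₀ : V), ∀ r₀ : V, G.CanCatch n c₀ r₀

/-- The capture time: the least `n` such that the cop has an initial placement
guaranteeing capture within `n` cop moves. -/
noncomputable def capt (G : RefGraph V) : ℕ :=
  sInf {n : ℕ | ∃ c₀ : V, ∀ r₀ : V, G.CanCatch n c₀ r₀}

/-- A graph of finite corner rank `α` is `1`-cop-win if some vertex of corner
rank `α` is adjacent to every vertex of `G_{α-1}`. -/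
def OneCopWin (G : RefGraph V) (α : ℕ) : Prop :=
  ∃ x, G.cr x = (α : ℕ∞) ∧ ∀ u, ((α - 1 : ℕ) : ℕ∞) ≤ G.cr u → G.Adj x u

/-- `r`-cop-win for `r ∈ {0,1}`. -/
def RCopWin (G : RefGraph V) (r α : ℕ) : Prop :=
  (r = 1 ∧ G.OneCopWin α) ∨ (r = 0 ∧ ¬ G.OneCopWin α)

/-- The largest finite corner rank occurring in `G` (0 if none occurs). -/
noncomputable def gammaMax (G : RefGraph V) : ℕ :=
  sSup {n : ℕ | ∃ v, G.cr v = (n : ℕ∞)}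

/-- `F_∞`: equal to `F_{γ+1}` where `γ` is the largest finite corner rank, and
the identity (`F₁`) when no vertex has finite corner rank. -/
noncomputable def Finf (G : RefGraph V) : V → Set V :=
  G.Fk (G.gammaMax + 1)

/-- `e` lists the vertices as a dismantling ordering: every vertex except the
last is cornered, in the induced subgraph on it and the later vertices, by some
later vertex. -/
def IsDismantlingOrdering (G : RefGraph V) {n : ℕ} (e : Fin n ≃ V) : Prop :=
  ∀ i : Fin n, (i : ℕ) + 1 < n →
    ∃ j : Fin n, i < j ∧ e j ≠ e i ∧
      ∀ u, (∃ m : Fin n, i ≤ m ∧ e m = u) → G.Adj (e i) u → G.Adj (e j) u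

/-- `G` has a dismantling ordering. -/
def HasDismantling (G : RefGraph V) [Fintype V] : Prop :=
  ∃ e : Fin (Fintype.card V) ≃ V, G.IsDismantlingOrdering e

end RefGraph

/-! Every vertex `r'` of `Fₖ(r₀)` dominates, inside `Gₖ`, the vertex it is projected from, so by
induction on `k` a robber step `r₀ → r₁` lifts to an edge `r' ~ r₁'` with `r₁' ∈ Fₖ(r₁)`. The only
delicate case is a vertex `u₁` of rank exactly `k`: it is a strict corner of `Gₖ`, and among the
vertices strictly cornering it one with maximal neighbourhood in `Gₖ` is not a strict corner, hence
lies in `Gₖ₊₁` and in `fₖ(u₁)`. If `c` `k`-corners `r₀` through `r'`, the lift `r₁' ∈ Gₖ` is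
adjacent to `r'`, hence to `c`. -/

namespace RefGraph

variable {V : Type*} (G : RefGraph V)

section CornerRank

lemma lvl_antitone : Antitone G.lvl :=
  antitone_nat_of_succ_le fun _ _ hv => hv.1

lemma one_le_cr (v : V) : 1 ≤ G.cr v :=
  le_sInf fun _ ⟨_, hn, _⟩ => hn ▸ le_add_self

lemma cr_le_of_notMem_lvl {k : ℕ} {v : V} (hv : v ∉ G.lvl k) : G.cr v ≤ k := by
  induction k with
  | zero => exact absurd (Set.mem_univ v) hv
  | succ k ih =>
    by_cases hvk : v ∈ G.lvl k
    · have hcorner : G.IsStrictCorner (G.lvl k) v := not_not.mp fun h => hv ⟨hvk, h⟩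
      exact_mod_cast (sInf_le ⟨k, rfl, hvk, Or.inl hcorner⟩ : G.cr v ≤ k + 1)
    · exact (ih hvk).trans (by exact_mod_cast k.le_succ)

lemma cr_le_of_isCliqueSet {j : ℕ} (hj : G.IsCliqueSet (G.lvl j)) (v : V) :
    G.cr v ≤ (j + 1 : ℕ) := by
  by_cases hv : v ∈ G.lvl j
  · exact_mod_cast (sInf_le ⟨j, rfl, hv, Or.inr hj⟩ : G.cr v ≤ j + 1)
  · exact (G.cr_le_of_notMem_lvl hv).trans (by exact_mod_cast j.le_succ)

lemma le_cr_of_mem_lvl {k : ℕ} {v : V} (hclique : ∀ j < k, ¬ G.IsCliqueSet (G.lvl j))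
    (hv : v ∈ G.lvl k) : ((k + 1 : ℕ) : ℕ∞) ≤ G.cr v := by
  refine le_sInf ?_
  rintro _ ⟨m, rfl, -, hstop⟩
  obtain hmk | hkm := lt_or_ge m k
  · exfalso
    rcases hstop with hcorner | hm
    · exact (G.lvl_antitone hmk hv).2 hcorner
    · exact hclique m hmk hm
  · exact_mod_cast Nat.succ_le_succ hkm

/-- Nonemptiness rules out that the ranking stopped at a clique before stage `k + 1`. -/
lemma GkSet_succ_eq_lvl {k : ℕ} (hne : (G.GkSet (k + 1)).Nonempty) :
    G.GkSet (k + 1) = G.lvl k := by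
  obtain ⟨v₀, hv₀⟩ := hne
  have hclique : ∀ j < k, ¬ G.IsCliqueSet (G.lvl j) := fun j hj hcl => by
    have : ((k + 1 : ℕ) : ℕ∞) ≤ (j + 1 : ℕ) := hv₀.trans (G.cr_le_of_isCliqueSet hcl v₀)
    norm_cast at this
    omega
  ext v
  refine ⟨fun hv => ?_, G.le_cr_of_mem_lvl hclique⟩
  by_contra hvk
  have : ((k + 1 : ℕ) : ℕ∞) ≤ k := le_trans hv (G.cr_le_of_notMem_lvl hvk)
  norm_cast at this
  omega

lemma GkSet_antitone {m n : ℕ} (h : m ≤ n) : G.GkSet n ⊆ G.GkSet m :=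
  fun v (hv : (n : ℕ∞) ≤ G.cr v) => show (m : ℕ∞) ≤ G.cr v from (Nat.mono_cast h).trans hv

lemma GkSet_succ_succ_eq {k : ℕ} (hne : (G.GkSet (k + 2)).Nonempty) :
    G.GkSet (k + 2) = {v ∈ G.GkSet (k + 1) | ¬ G.IsStrictCorner (G.GkSet (k + 1)) v} := by
  rw [G.GkSet_succ_eq_lvl hne, G.GkSet_succ_eq_lvl (hne.mono (G.GkSet_antitone (k + 1).le_succ))]
  rfl

end CornerRank

section Corners

variable {G} {S : Set V}

lemma StrictCornersIn.trans {w' w v : V} (h₁ : G.StrictCornersIn S w' w)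
    (h₂ : G.StrictCornersIn S w v) : G.StrictCornersIn S w' v := by
  obtain ⟨hw', -, hdom₁, -⟩ := h₁
  obtain ⟨-, hv, hdom₂, u, hu, hwu, hvu⟩ := h₂
  exact ⟨hw', hv, fun x hx hvx => hdom₁ x hx (hdom₂ x hx hvx), u, hu, hdom₁ u hu hwu, hvu⟩

lemma IsStrictCorner.exists_strictCornersIn_not_isStrictCorner [Finite V] {v : V}
    (h : G.IsStrictCorner S v) : ∃ w, G.StrictCornersIn S w v ∧ ¬ G.IsStrictCorner S w := by
  obtain ⟨w, hw, hmax⟩ := (Set.toFinite {w | G.StrictCornersIn S w v}).exists_maximalFor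
    (fun w => {u | u ∈ S ∧ G.Adj w u}) _ h
  refine ⟨w, hw, fun ⟨w', hw'⟩ => ?_⟩
  obtain ⟨-, -, hdom, u, hu, hw'u, hwu⟩ := id hw'
  exact hwu (hmax (hw'.trans hw) (fun x ⟨hx, hwx⟩ => ⟨hx, hdom x hx hwx⟩) ⟨hu, hw'u⟩).2

end Corners

section Projection

lemma fk_subset_GkSet (k : ℕ) (u : V) : G.fk k u ⊆ G.GkSet (k + 1) := by
  unfold fk
  split_ifs with hcr
  · rintro _ rfl
    exact_mod_cast ENat.natCast_add_one_le_iff.mpr hcr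
  · exact fun _ hw => hw.1

lemma Fk_succ_succ (k : ℕ) (r : V) : G.Fk (k + 2) r = ⋃ u ∈ G.Fk (k + 1) r, G.fk (k + 1) u :=
  rfl

lemma Fk_subset_GkSet : ∀ (k : ℕ) (r : V), G.Fk k r ⊆ G.GkSet k
  | 0, _ => by simp [GkSet]
  | 1, _ => by
    rintro _ rfl
    exact_mod_cast G.one_le_cr _
  | k + 2, _ => by
    rw [Fk_succ_succ]
    exact Set.iUnion₂_subset fun u _ => G.fk_subset_GkSet (k + 1) u

lemma adj_of_mem_fk {k : ℕ} {u r' x : V} (hr' : r' ∈ G.fk k u) (hx : x ∈ G.GkSet k)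
    (hux : G.Adj u x) : G.Adj r' x := by
  unfold fk at hr'
  split_ifs at hr'
  · exact hr' ▸ hux
  · exact hr'.2.2.2.1 x hx hux

lemma exists_adj_mem_fk [Finite V] {k : ℕ} {u u₁ r' : V} (hu : u ∈ G.GkSet (k + 1))
    (hu₁ : u₁ ∈ G.GkSet (k + 1)) (huu₁ : G.Adj u u₁) (hr' : r' ∈ G.fk (k + 1) u) :
    ∃ r₁' ∈ G.fk (k + 1) u₁, G.Adj r' r₁' := by
  by_cases hcr : ((k + 1 : ℕ) : ℕ∞) < G.cr u₁
  · refine ⟨u₁, ?_, G.adj_of_mem_fk hr' hu₁ huu₁⟩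
    unfold fk
    rw [if_pos hcr]
    rfl
  have hnext := G.GkSet_succ_succ_eq ⟨r', G.fk_subset_GkSet (k + 1) u hr'⟩
  have hcorner : G.IsStrictCorner (G.GkSet (k + 1)) u₁ := by
    by_contra hnot
    have hu₁' : u₁ ∈ G.GkSet (k + 2) := hnext ▸ ⟨hu₁, hnot⟩
    exact hcr (lt_of_lt_of_le (by exact_mod_cast k.succ.lt_succ_self) hu₁')
  obtain ⟨w, hw, hwmax⟩ := hcorner.exists_strictCornersIn_not_isStrictCorner
  have hwu : G.Adj w u := hw.2.2.1 u hu (G.symm u u₁ huu₁)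
  refine ⟨w, ?_, G.adj_of_mem_fk hr' hw.1 (G.symm w u hwu)⟩
  unfold fk
  rw [if_neg hcr]
  exact ⟨hnext ▸ ⟨hw.1, hwmax⟩, hw⟩

lemma exists_adj_mem_Fk [Finite V] {r₀ r₁ : V} (h : G.Adj r₀ r₁) :
    ∀ (k : ℕ), ∀ r' ∈ G.Fk k r₀, ∃ r₁' ∈ G.Fk k r₁, G.Adj r' r₁'
  | 0, _, rfl | 1, _, rfl => ⟨r₁, rfl, h⟩
  | k + 2, r', hr' => by
    simp only [Fk_succ_succ, Set.mem_iUnion, exists_prop] at hr' ⊢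
    obtain ⟨u, hu, hr'u⟩ := hr'
    obtain ⟨u₁, hu₁, huu₁⟩ := exists_adj_mem_Fk h (k + 1) u hu
    obtain ⟨r₁', hr₁', hadj⟩ := G.exists_adj_mem_fk (G.Fk_subset_GkSet _ r₀ hu)
      (G.Fk_subset_GkSet _ r₁ hu₁) huu₁ hr'u
    exact ⟨r₁', ⟨u₁, hu₁, hr₁'⟩, hadj⟩

end Projection

end RefGraph

theorem k_cornered_to_k_caught_general
    {V : Type*} [Fintype V] (G : RefGraph V)
    (k : ℕ) (c r₀ : V) (h : G.kCornered k c r₀) :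
    ∀ r₁ : V, G.Adj r₀ r₁ → ∃ c₁ : V, G.Adj c c₁ ∧ c₁ ∈ G.Fk k r₁ := by
  intro r₁ h01
  cases k with
  | zero => exact ⟨r₁, h ▸ h01, rfl⟩
  | succ m =>
    obtain ⟨r', hr', hcorner⟩ := h
    obtain ⟨c₁, hc₁, hr'c₁⟩ := G.exists_adj_mem_Fk h01 (m + 1) r' hr'
    exact ⟨c₁, hcorner c₁ (Or.inl (G.Fk_subset_GkSet _ r₁ hc₁)) hr'c₁, hc₁⟩

/-- For `k ≥ 1`, if the cop at `c` has `k`-cornered the robber at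
`r₀`, then for every robber move `r₁ ∈ N[r₀]` there is a cop move `c₁ ∈ N[c]`
with `c₁ ∈ Fₖ(r₁)`, i.e. the cop `k`-catches the robber. -/
theorem k_cornered_to_k_caught
    {V : Type*} [Fintype V] [Nonempty V] (G : RefGraph V)
    (k : ℕ) (hk : 1 ≤ k) (c r₀ : V) (h : G.kCornered k c r₀) :
    ∀ r₁ : V, G.Adj r₀ r₁ → ∃ c₁ : V, G.Adj c c₁ ∧ c₁ ∈ G.Fk k r₁ :=
  k_cornered_to_k_caught_general G k c r₀ h
end

section
/- If the cop at vertex c has k-cornered the robber at vertex r (robber to move), then the cop can win within k moves; likewise, if the cop at c has (k+1)-caught the robber at r, then the cop can win within k moves. -/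
open Classical

namespace RefGraph

variable {V : Type*}

lemma cr_one_le' (G : RefGraph V) (v : V) : 1 ≤ G.cr v := by
  refine le_sInf ?_
  rintro n ⟨m, rfl, -⟩
  exact le_add_self

lemma lvl_succ_subset' (G : RefGraph V) (k : ℕ) : G.lvl (k + 1) ⊆ G.lvl k :=
  fun _ hv => hv.1

lemma lvl_mono' (G : RefGraph V) {m n : ℕ} (h : m ≤ n) : G.lvl n ⊆ G.lvl m := by
  induction n with
  | zero => rw [Nat.le_zero.mp h]
  | succ n ih =>
    rcases Nat.lt_or_ge m (n + 1) with h' | h'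
    · exact (G.lvl_succ_subset' n).trans (ih (Nat.lt_succ_iff.mp h'))
    · rw [le_antisymm h h']

lemma GkSet_mono' (G : RefGraph V) {m n : ℕ} (h : m ≤ n) : G.GkSet n ⊆ G.GkSet m := by
  intro v hv
  have h' : ((m : ℕ) : ℕ∞) ≤ ((n : ℕ) : ℕ∞) := by exact_mod_cast h
  exact le_trans h' hv

lemma cr_le_of_mem' (G : RefGraph V) {v : V} {m : ℕ} (hv : v ∈ G.lvl m)
    (h : G.IsStrictCorner (G.lvl m) v ∨ G.IsCliqueSet (G.lvl m)) :
    G.cr v ≤ (m : ℕ∞) + 1 := by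
  unfold cr
  exact sInf_le ⟨m, rfl, hv, h⟩

lemma GkSet_subset_lvl' (G : RefGraph V) (k : ℕ) : G.GkSet (k + 1) ⊆ G.lvl k := by
  induction k with
  | zero => intro v _; trivial
  | succ k ih =>
    intro v hv
    have hv' : v ∈ G.lvl k := ih (G.GkSet_mono' (by omega) hv)
    refine ⟨hv', fun hc => ?_⟩
    have h1 := G.cr_le_of_mem' hv' (Or.inl hc)
    have h2 : ((k + 2 : ℕ) : ℕ∞) ≤ G.cr v := hv
    have h3 : ((k + 2 : ℕ) : ℕ∞) ≤ (k : ℕ∞) + 1 := le_trans h2 h1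
    have : (k + 2 : ℕ) ≤ k + 1 := by exact_mod_cast (by push_cast at h3 ⊢; exact h3 : ((k + 2 : ℕ) : ℕ∞) ≤ ((k + 1 : ℕ) : ℕ∞))
    omega

lemma lvl_subset_GkSet' (G : RefGraph V) (k : ℕ)
    (h : ∀ m < k, ¬ G.IsCliqueSet (G.lvl m)) : G.lvl k ⊆ G.GkSet (k + 1) := by
  intro v hv
  show ((k + 1 : ℕ) : ℕ∞) ≤ G.cr v
  unfold cr
  refine le_sInf ?_
  rintro n ⟨m, rfl, hvm, hcc⟩
  have hmk : k ≤ m := by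
    by_contra hlt
    push_neg at hlt
    rcases hcc with hcorner | hclique
    · have hv1 : v ∈ G.lvl (m + 1) := G.lvl_mono' (by omega) hv
      exact hv1.2 hcorner
    · exact h m hlt hclique
  calc ((k + 1 : ℕ) : ℕ∞) ≤ ((m + 1 : ℕ) : ℕ∞) := by exact_mod_cast Nat.succ_le_succ hmk
    _ = (m : ℕ∞) + 1 := by push_cast; rfl

lemma noClique_of_GkSet_nonempty' (G : RefGraph V) {k : ℕ} {v : V}
    (hv : v ∈ G.GkSet (k + 1)) : ∀ m < k, ¬ G.IsCliqueSet (G.lvl m) := by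
  intro m hm hclique
  have hvl : v ∈ G.lvl m := G.lvl_mono' (le_of_lt hm) (G.GkSet_subset_lvl' k hv)
  have h1 := G.cr_le_of_mem' hvl (Or.inr hclique)
  have h3 : ((k + 1 : ℕ) : ℕ∞) ≤ ((m + 1 : ℕ) : ℕ∞) := by
    refine le_trans hv (le_trans h1 ?_); push_cast; rfl
  have : k + 1 ≤ m + 1 := by exact_mod_cast h3
  omega

lemma exists_noncorner_corner' (G : RefGraph V) [Fintype V] {S : Set V} {u : V}
    (h : G.IsStrictCorner S u) :
    ∃ w, G.StrictCornersIn S w u ∧ ¬ G.IsStrictCorner S w := by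
  classical
  set f : V → ℕ := fun w => (Finset.univ.filter (fun x => x ∈ S ∧ G.Adj w x)).card with hf
  obtain ⟨w0, hw0⟩ := h
  obtain ⟨w, hwT, hmax⟩ := Finset.exists_max_image
      (Finset.univ.filter (fun w => G.StrictCornersIn S w u)) f
      ⟨w0, by simp [hw0]⟩
  rw [Finset.mem_filter] at hwT
  have hw : G.StrictCornersIn S w u := hwT.2
  refine ⟨w, hw, fun hcorner => ?_⟩
  obtain ⟨w', hw'⟩ := hcorner
  obtain ⟨hw'S, hwS, hsub, x, hxS, hadjx, hnadjx⟩ := hw'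
  obtain ⟨-, huS, hsub2, y, hyS, hady, hnady⟩ := hw
  have hT' : G.StrictCornersIn S w' u :=
    ⟨hw'S, huS, fun z hz hadjz => hsub z hz (hsub2 z hz hadjz), y, hyS, hsub y hyS hady, hnady⟩
  have hlt : f w < f w' := by
    apply Finset.card_lt_card
    constructor
    · intro z hz
      rw [Finset.mem_filter] at hz ⊢
      exact ⟨Finset.mem_univ z, hz.2.1, hsub z hz.2.1 hz.2.2⟩
    · intro hcon
      have hx : x ∈ Finset.univ.filter (fun z => z ∈ S ∧ G.Adj w' z) := by
        rw [Finset.mem_filter]; exact ⟨Finset.mem_univ x, hxS, hadjx⟩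
      have := hcon hx
      rw [Finset.mem_filter] at this
      exact hnadjx this.2.2
  have := hmax w' (by simp [hT'])
  omega

lemma mem_fk_elim' (G : RefGraph V) {k : ℕ} {u w : V} (hu : u ∈ G.GkSet k)
    (hw : w ∈ G.fk k u) :
    w ∈ G.GkSet (k + 1) ∧ (w = u ∨ G.StrictCornersIn (G.GkSet k) w u) := by
  unfold fk at hw
  split at hw
  case isTrue h =>
    obtain rfl : w = u := hw
    refine ⟨?_, Or.inl rfl⟩
    have : (k : ℕ∞) + 1 ≤ G.cr w := Order.add_one_le_of_lt h
    refine le_trans (le_of_eq ?_) this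
    push_cast; rfl
  case isFalse h => exact ⟨hw.1, Or.inr hw.2⟩

lemma mem_GkSet_of_mem_Fk' (G : RefGraph V) :
    ∀ (k : ℕ) {r s : V}, s ∈ G.Fk (k + 1) r → s ∈ G.GkSet (k + 1) := by
  intro k
  induction k with
  | zero =>
    intro r s hs
    obtain rfl : s = r := hs
    have := G.cr_one_le' s
    simpa [GkSet] using this
  | succ k ih =>
    intro r s hs
    obtain ⟨t, ht, hsf⟩ := Set.mem_iUnion₂.mp hs
    exact (G.mem_fk_elim' (ih ht) hsf).1

lemma fk_adj' (G : RefGraph V) {k : ℕ} {u v w : V} (hu : u ∈ G.GkSet k)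
    (hv : v ∈ G.GkSet k) (hadj : G.Adj u v) (hw : w ∈ G.fk k u) : G.Adj w v := by
  rcases (G.mem_fk_elim' hu hw).2 with rfl | hsc
  · exact hadj
  · exact hsc.2.2.1 v hv hadj

lemma Fk_adj' (G : RefGraph V) :
    ∀ (k : ℕ) {r r₁ s t : V}, G.Adj r r₁ →
      s ∈ G.Fk (k + 1) r → t ∈ G.Fk (k + 1) r₁ → G.Adj s t := by
  intro k
  induction k with
  | zero =>
    intro r r₁ s t h hs ht
    obtain rfl : s = r := hs
    obtain rfl : t = r₁ := ht
    exact h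
  | succ k ih =>
    intro r r₁ s t h hs ht
    obtain ⟨s₀, hs₀, hsf⟩ := Set.mem_iUnion₂.mp hs
    obtain ⟨t₀, ht₀, htf⟩ := Set.mem_iUnion₂.mp ht
    have hs₀G := G.mem_GkSet_of_mem_Fk' k hs₀
    have ht₀G := G.mem_GkSet_of_mem_Fk' k ht₀
    have h1 : G.Adj s t₀ := G.fk_adj' hs₀G ht₀G (ih h hs₀ ht₀) hsf
    have hsG : s ∈ G.GkSet (k + 1) :=
      G.GkSet_mono' (by omega) (G.mem_fk_elim' hs₀G hsf).1
    exact G.symm _ _ (G.fk_adj' ht₀G hsG (G.symm _ _ h1) htf)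

lemma Fk_nonempty' (G : RefGraph V) [Fintype V] :
    ∀ (k : ℕ), (∀ m < k, ¬ G.IsCliqueSet (G.lvl m)) → ∀ v, (G.Fk (k + 1) v).Nonempty := by
  intro k
  induction k with
  | zero => intro _ v; exact ⟨v, rfl⟩
  | succ k ih =>
    intro h v
    obtain ⟨s, hs⟩ := ih (fun m hm => h m (by omega)) v
    have hsG : s ∈ G.GkSet (k + 1) := G.mem_GkSet_of_mem_Fk' k hs
    suffices hne : (G.fk (k + 1) s).Nonempty by
      obtain ⟨w, hw⟩ := hne
      exact ⟨w, Set.mem_iUnion₂.mpr ⟨s, hs, hw⟩⟩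
    by_cases hlt : ((k + 1 : ℕ) : ℕ∞) < G.cr s
    · exact ⟨s, by unfold fk; rw [if_pos hlt]; rfl⟩
    · push_neg at hlt
      have hcr : G.cr s = ((k + 1 : ℕ) : ℕ∞) := le_antisymm hlt hsG
      have hSne : {n : ℕ∞ | ∃ m : ℕ, n = (m : ℕ∞) + 1 ∧ s ∈ G.lvl m ∧
          (G.IsStrictCorner (G.lvl m) s ∨ G.IsCliqueSet (G.lvl m))}.Nonempty := by
        by_contra hcon
        rw [Set.not_nonempty_iff_eq_empty] at hcon
        have : G.cr s = ⊤ := by rw [cr, hcon, sInf_empty]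
        rw [hcr] at this
        exact (ENat.coe_ne_top _) this
      have hmem := csInf_mem hSne
      rw [show sInf _ = G.cr s from rfl, hcr] at hmem
      obtain ⟨m, heq, hml, hcc⟩ := hmem
      have hmk : m = k := by
        have : k + 1 = m + 1 := by exact_mod_cast heq
        omega
      subst hmk
      rcases hcc with hcorner | hclique
      · have hEq : G.lvl m = G.GkSet (m + 1) :=
          Set.Subset.antisymm (G.lvl_subset_GkSet' m (fun j hj => h j (by omega)))
            (G.GkSet_subset_lvl' m)
        obtain ⟨w, hwc, hwnc⟩ := G.exists_noncorner_corner' hcorner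
        have hwlvl : w ∈ G.lvl (m + 1) := ⟨hwc.1, hwnc⟩
        have hwG : w ∈ G.GkSet (m + 2) :=
          G.lvl_subset_GkSet' (m + 1) (fun j hj => h j (by omega)) hwlvl
        refine ⟨w, ?_⟩
        unfold fk
        rw [if_neg (by push_neg; exact hlt)]
        exact ⟨hwG, hEq ▸ hwc⟩
      · exact absurd hclique (h m (by omega))

lemma WinWithin_mono' (G : RefGraph V) :
    ∀ (k : ℕ) {c r : V}, G.WinWithin k c r → G.WinWithin (k + 1) c r := by
  intro k
  induction k with
  | zero => intro c r h; exact Or.inl h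
  | succ k ih =>
    intro c r h
    rcases h with h | h
    · exact Or.inl h
    · refine Or.inr fun r₁ h₁ => ?_
      obtain ⟨c₁, hc₁, hw⟩ := h r₁ h₁
      exact ⟨c₁, hc₁, ih hw⟩

end RefGraph

/-- If the cop at `c` has `k`-cornered the robber at `r` (robber
to move), the cop can win within `k` moves; likewise if the cop at `c` has
`(k+1)`-caught the robber at `r`, the cop can win within `k` moves. -/
theorem cornered_or_caught_implies_win_within
    {V : Type*} [Fintype V] [Nonempty V] (G : RefGraph V)
    (k : ℕ) (c r : V) :
    (G.kCornered k c r → G.WinWithin k c r) ∧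
    (c ∈ G.Fk (k + 1) r → G.WinWithin k c r) := by
  induction k generalizing c r with
  | zero =>
    constructor
    · intro h; exact h
    · intro h; exact h
  | succ k IH =>
    have A : ∀ c r : V, G.kCornered (k + 1) c r → G.WinWithin (k + 1) c r := by
      intro c r hcor
      obtain ⟨r', hr'F, hcorner⟩ := hcor
      refine Or.inr fun r₁ hrr₁ => ?_
      have hr'G := G.mem_GkSet_of_mem_Fk' k hr'F
      have hnc := G.noClique_of_GkSet_nonempty' hr'G
      obtain ⟨r₁', hr₁'⟩ := G.Fk_nonempty' k hnc r₁
      have hadj : G.Adj r' r₁' := G.Fk_adj' k hrr₁ hr'F hr₁'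
      have hr₁'G := G.mem_GkSet_of_mem_Fk' k hr₁'
      have hc : G.Adj c r₁' := hcorner r₁' (Or.inl hr₁'G) hadj
      exact ⟨r₁', hc, (IH r₁' r₁).2 hr₁'⟩
    refine ⟨A c r, ?_⟩
    intro hc
    obtain ⟨s, hsF, hsf⟩ := Set.mem_iUnion₂.mp hc
    have hsG := G.mem_GkSet_of_mem_Fk' k hsF
    obtain ⟨hG2, heq | hsc⟩ := G.mem_fk_elim' hsG hsf
    · subst heq
      exact G.WinWithin_mono' k ((IH c r).2 hsF)
    · refine A c r ⟨s, hsF, fun u hu hadj => ?_⟩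
      rcases hu with hu | rfl
      · exact hsc.2.2.1 u hu hadj
      · exact G.refl u
end
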